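/- Let m ∈ ℤ≥0, b ≠ 0, c ≠ 0, λ ≠ 1, α a positive integer. Define the Frobenius-type Eulerian polynomials of order α by ((1-λ)/(e^{t(λ-1)}-λ))^α e^{xt} = ∑_{n≥0} A_n^{(α)}(x|λ) t^n/n!, and Poisson–Charlier polynomials Cₙ(x;a) = ∑_{k=0}^n C(n,k)(-1)^{n-k} a^{-k}(x)_k. For n ≥ 1, the polynomial Sₙ(x) := ((1-λ)/(e^{(λ-1)t}-λ))^α · x · e^{nct}(1+bt)^{mn} x^{n-1} satisfies Sₙ(x) = (-1)^{mn} ∑_{l=0}^{n-1} C_{mn}(l; -nc/b) (nc)^l C(n-1,l) A_{n-l}^{(α)}(x|λ). -/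

import Mathlib

open PowerSeries Nat

noncomputable section

/-- The exponential series `e^t ∈ ℚ[[t]]`. -/
def expS : PowerSeries ℚ := PowerSeries.exp ℚ

/-- `log(1+t) = ∑_{k≥1} (-1)^{k+1} t^k / k`. -/
def logS : PowerSeries ℚ := PowerSeries.mk fun k => if k = 0 then 0 else (-1 : ℚ)^(k+1) / k

/-- `log(1+t)/t = ∑_{k≥0} (-1)^k t^k/(k+1)`. -/
def LtS : PowerSeries ℚ := PowerSeries.mk fun k => (-1 : ℚ)^k / (k+1)

/-- `(e^{bt} - 1)/t`. -/
def ebt (b : ℚ) : PowerSeries ℚ := PowerSeries.mk fun m => b^(m+1) / (m+1)!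

/-- Falling factorial `(x)_m = x(x-1)⋯(x-m+1)`. -/
def ff (x : ℚ) (m : ℕ) : ℚ := ∏ i ∈ Finset.range m, (x - i)

/-- `(1+t)^x = ∑_m (x)_m t^m/m!`. -/
def onePlusPow (x : ℚ) : PowerSeries ℚ := PowerSeries.mk fun m => ff x m / m !

/-- Integer powers of a power series (negative powers via `PowerSeries.inv`). -/
def zp (f : PowerSeries ℚ) : ℤ → PowerSeries ℚ
  | Int.ofNat n => f ^ n
  | Int.negSucc n => f⁻¹ ^ (n + 1)

/-- Stirling numbers of the second kind. -/
def S2 : ℕ → ℕ → ℕ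
  | 0, 0 => 1
  | 0, _ + 1 => 0
  | _ + 1, 0 => 0
  | n + 1, k + 1 => (k + 1) * S2 n (k + 1) + S2 n k

/-- Signed Stirling numbers of the first kind: `(x)_n = ∑_l S1 n l • x^l`. -/
def S1 : ℕ → ℕ → ℤ
  | 0, 0 => 1
  | 0, _ + 1 => 0
  | _ + 1, 0 => 0
  | n + 1, k + 1 => S1 n k - n * S1 n (k + 1)

/-- Bernoulli polynomial of (integer) order `a` evaluated at `x`:
`(t/(e^t-1))^a e^{xt} = ∑_m Bpol a x m • t^m/m!`. -/
def Bpol (a : ℤ) (x : ℚ) (m : ℕ) : ℚ :=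
  m ! * PowerSeries.coeff m (zp (ebt 1)⁻¹ a * PowerSeries.rescale x expS)

/-- Bernoulli numbers of order `a`. -/
def Bnum (a : ℤ) (m : ℕ) : ℚ := Bpol a 0 m

/-- Narumi numbers: `(log(1+t)/t)^n = ∑_l Nnum n l • t^l/l!`. -/
def Nnum (n l : ℕ) : ℚ := l ! * PowerSeries.coeff l (LtS ^ n)

/-- Narumi polynomials of (integer) order `a`:
`(log(1+t)/t)^a (1+t)^x = ∑_l Npol a x l • t^l/l!`. -/
def Npol (a : ℤ) (x : ℚ) (l : ℕ) : ℚ :=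
  l ! * PowerSeries.coeff l (zp LtS a * onePlusPow x)

/-- Bernoulli polynomials of the second kind:
`t(1+t)^x/log(1+t) = ∑_m b2 x m • t^m/m!`. -/
def b2 (x : ℚ) (m : ℕ) : ℚ := m ! * PowerSeries.coeff m (onePlusPow x * LtS⁻¹)

/-- Poisson–Charlier polynomial `C_n(x;a)`. -/
def PC (n : ℕ) (x a : ℚ) : ℚ :=
  ∑ k ∈ Finset.range (n + 1), (n.choose k : ℚ) * (-1)^(n - k) * (a⁻¹)^k * ff x k

/-- Generalized binomial coefficient `C(x, m) = (x)_m/m!`. -/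
def gchoose (x : ℚ) (m : ℕ) : ℚ := ff x m / m !

/-- Action of a power series `f(t) = ∑ a_k t^k/k!` on a polynomial:
`f(t) p(x) = ∑_k a_k p^{(k)}(x)/k!` (a finite sum). -/
def act (f : PowerSeries ℚ) (p : Polynomial ℚ) : Polynomial ℚ :=
  ∑ k ∈ Finset.range (p.natDegree + 1),
    PowerSeries.coeff k f • (⇑Polynomial.derivative)^[k] p

/-- `e^{xt} ∈ (ℚ[x])[[t]]`. -/
def expPoly : PowerSeries (Polynomial ℚ) :=
  PowerSeries.mk fun k => ((k ! : ℚ)⁻¹) • Polynomial.X ^ k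

/-- The Sheffer polynomial sequence attached to an invertible series `f`:
`f(t) e^{xt} = ∑_n (polyOf f n) t^n/n!`. -/
def polyOf (f : PowerSeries ℚ) (n : ℕ) : Polynomial ℚ :=
  (n ! : ℚ) • PowerSeries.coeff n (PowerSeries.map Polynomial.C f * expPoly)

/-- `((1-λ)/(e^t-λ))^α`. -/
def FEser (lam : ℚ) (α : ℕ) : PowerSeries ℚ :=
  (PowerSeries.C (1 - lam) * (expS - PowerSeries.C lam)⁻¹) ^ α

/-- Frobenius–Euler polynomials of order `α`. -/
def FE (lam : ℚ) (α n : ℕ) : Polynomial ℚ := polyOf (FEser lam α) n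

/-- `(2/(e^t+1))^α`. -/
def Eser (α : ℕ) : PowerSeries ℚ := (PowerSeries.C (2 : ℚ) * (expS + 1)⁻¹) ^ α

/-- Euler polynomials of order `α`. -/
def Epol (α n : ℕ) : Polynomial ℚ := polyOf (Eser α) n

/-- `((1-λ)/(e^{(λ-1)t}-λ))^α`. -/
def Aser (lam : ℚ) (α : ℕ) : PowerSeries ℚ :=
  (PowerSeries.C (1 - lam) *
    (PowerSeries.rescale (lam - 1) expS - PowerSeries.C lam)⁻¹) ^ α

/-- Frobenius-type Eulerian polynomials of order `α`. -/
def Apol (lam : ℚ) (α n : ℕ) : Polynomial ℚ := polyOf (Aser lam α) n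

end

/-!
The operator `act f` is `ℚ`-linear and sends `x ^ j` to the Sheffer polynomial `polyOf f j`, so
`g(t) x^(n-1) = ∑_k C(n-1,k) (k! [t^k] g) x^(n-1-k)` for `g = e^(nct) (1+bt)^(mn)`, and applying
`Aser λ α` after multiplying by `x` turns each `x^(n-k)` into `A_(n-k)^(α)(x|λ)`. Finally
`k! [t^k] g = ∑_j C(k,j) (mn)_j (nc)^(k-j) b^j`, and the symmetry `C(k,j) (M)_j = C(M,j) (k)_j`
identifies this with `(-1)^(mn) C_(mn)(k; -nc/b) (nc)^k`.
-/

open Finset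

section Act

variable (f : PowerSeries ℚ)

lemma act_eq_sum_of_natDegree_lt {p : Polynomial ℚ} {N : ℕ} (h : p.natDegree < N) :
    act f p = ∑ k ∈ range N, coeff k f • Polynomial.derivative^[k] p := by
  refine sum_subset (range_subset_range.2 (by omega)) fun k _ hk => ?_
  rw [Polynomial.iterate_derivative_eq_zero (by simp only [mem_range] at hk; omega), smul_zero]

lemma act_add (p q : Polynomial ℚ) : act f (p + q) = act f p + act f q := by
  set N := max p.natDegree q.natDegree + 1
  rw [act_eq_sum_of_natDegree_lt f (N := N) (Nat.lt_succ_of_le (Polynomial.natDegree_add_le p q)),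
    act_eq_sum_of_natDegree_lt f (N := N) (Nat.lt_succ_of_le (le_max_left _ _)),
    act_eq_sum_of_natDegree_lt f (N := N) (Nat.lt_succ_of_le (le_max_right _ _)),
    ← sum_add_distrib]
  simp only [iterate_map_add, smul_add]

lemma act_smul (c : ℚ) (p : Polynomial ℚ) : act f (c • p) = c • act f p := by
  rw [act_eq_sum_of_natDegree_lt f (Nat.lt_succ_of_le (Polynomial.natDegree_smul_le c p)), act,
    smul_sum]
  simp only [Polynomial.iterate_derivative_smul, smul_comm c]

noncomputable def actₗ : Polynomial ℚ →ₗ[ℚ] Polynomial ℚ where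
  toFun := act f
  map_add' := act_add f
  map_smul' := act_smul f

lemma act_sum {ι : Type*} (s : Finset ι) (p : ι → Polynomial ℚ) :
    act f (∑ i ∈ s, p i) = ∑ i ∈ s, act f (p i) :=
  map_sum (actₗ f) p s

lemma act_X_pow_eq_sum (j : ℕ) :
    act f (Polynomial.X ^ j) =
      ∑ k ∈ range (j + 1), (coeff k f * j.descFactorial k) • Polynomial.X ^ (j - k) := by
  rw [act, Polynomial.natDegree_X_pow]
  simp only [Polynomial.iterate_derivative_X_pow_eq_smul, smul_smul]

lemma act_X_pow (j : ℕ) : act f (Polynomial.X ^ j) = polyOf f j := by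
  rw [act_X_pow_eq_sum, polyOf, coeff_mul, Nat.sum_antidiagonal_eq_sum_range_succ_mk, smul_sum]
  refine sum_congr rfl fun k hk => ?_
  have hkj : k ≤ j := Nat.lt_succ_iff.1 (mem_range.1 hk)
  have hfac : ((j - k)! : ℚ) * j.descFactorial k = j ! := by
    exact_mod_cast Nat.factorial_mul_descFactorial hkj
  simp only [coeff_map, expPoly, coeff_mk, Polynomial.C_mul', smul_smul]
  congr 1
  field_simp
  linear_combination coeff k f * hfac

lemma act_X_mul_act_X_pow (g : PowerSeries ℚ) (j : ℕ) :
    act f (Polynomial.X * act g (Polynomial.X ^ j)) =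
      ∑ k ∈ range (j + 1), (coeff k g * k ! * j.choose k) • polyOf f (j + 1 - k) := by
  have hX : ∀ k ∈ range (j + 1), (Polynomial.X : Polynomial ℚ) *
      ((coeff k g * j.descFactorial k) • Polynomial.X ^ (j - k)) =
        (coeff k g * j.descFactorial k) • Polynomial.X ^ (j + 1 - k) := by
    intro k hk
    rw [mul_smul_comm, ← pow_succ' (Polynomial.X : Polynomial ℚ), show j - k + 1 = j + 1 - k by
      have := mem_range.1 hk; omega]
  rw [act_X_pow_eq_sum, mul_sum, sum_congr rfl hX, act_sum]
  refine sum_congr rfl fun k _ => ?_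
  rw [act_smul, act_X_pow, Nat.descFactorial_eq_factorial_mul_choose, Nat.cast_mul, mul_assoc]

end Act

section PoissonCharlier

lemma ff_natCast (k i : ℕ) : ff k i = k.descFactorial i := by
  rw [ff, ← descPochhammer_eval_eq_prod_range, descPochhammer_eval_eq_descFactorial]

lemma coeff_one_add_C_mul_X_pow (b : ℚ) (M j : ℕ) :
    coeff j ((1 + C b * X) ^ M) = M.choose j * b ^ j := by
  have hrescale : (1 + C b * X : PowerSeries ℚ) ^ M =
      rescale b ((1 + Polynomial.X) ^ M : Polynomial ℚ) := by
    simp [rescale_X]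
  rw [hrescale, coeff_rescale, Polynomial.coeff_coe, Polynomial.coeff_one_add_X_pow, mul_comm]

lemma coeff_rescale_exp_mul_one_add_pow_mul_factorial (a b : ℚ) (M k : ℕ) :
    coeff k (rescale a expS * (1 + C b * X) ^ M) * k ! =
      ∑ j ∈ range (k + 1), M.choose j * k.descFactorial j * a ^ (k - j) * b ^ j := by
  rw [coeff_mul, Nat.sum_antidiagonal_eq_sum_range_succ (fun i j => coeff i (rescale a expS) *
    coeff j ((1 + C b * X) ^ M)), ← sum_range_reflect, sum_mul]
  refine sum_congr rfl fun j hj => ?_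
  have hjk : j ≤ k := Nat.lt_succ_iff.1 (mem_range.1 hj)
  have hfac : ((k - j)! : ℚ) * k.descFactorial j = k ! := by
    exact_mod_cast Nat.factorial_mul_descFactorial hjk
  rw [show k + 1 - 1 - j = k - j by omega, show k - (k - j) = j by omega, coeff_rescale,
    coeff_one_add_C_mul_X_pow, expS, coeff_exp]
  simp only [eq_ratCast, Rat.cast_id]
  rw [← hfac]
  field_simp

lemma neg_one_pow_mul_PC_natCast_mul_pow {a : ℚ} (ha : a ≠ 0) (b : ℚ) (M k : ℕ) :
    (-1) ^ M * PC M k (-a / b) * a ^ k =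
      ∑ j ∈ range (M + 1), M.choose j * k.descFactorial j * a ^ (k - j) * b ^ j := by
  rw [PC, mul_sum, sum_mul]
  refine sum_congr rfl fun j hj => ?_
  rw [ff_natCast]
  rcases lt_or_ge k j with hkj | hjk
  · simp [Nat.descFactorial_eq_zero_iff_lt.2 hkj]
  have hsign : (-1 : ℚ) ^ M * (-1) ^ (M - j) * (-1) ^ j = 1 := by
    rw [← pow_add, ← pow_add]
    exact Even.neg_one_pow ⟨M, by have := mem_range.1 hj; omega⟩
  have hpow : (-a / b)⁻¹ ^ j * a ^ k = (-1) ^ j * b ^ j * a ^ (k - j) := by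
    rw [← Nat.sub_add_cancel hjk, pow_add, Nat.add_sub_cancel, inv_div, div_neg,
      neg_pow, div_pow]
    field_simp
  linear_combination (M.choose j * k.descFactorial j * (-1) ^ (M - j) * (-1) ^ M : ℚ) * hpow +
    (M.choose j * k.descFactorial j * a ^ (k - j) * b ^ j : ℚ) * hsign

lemma coeff_rescale_exp_mul_one_add_pow_mul_factorial_eq_PC {a : ℚ} (ha : a ≠ 0) (b : ℚ)
    (M k : ℕ) :
    coeff k (rescale a expS * (1 + C b * X) ^ M) * k ! = (-1) ^ M * PC M k (-a / b) * a ^ k := by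
  rw [coeff_rescale_exp_mul_one_add_pow_mul_factorial, neg_one_pow_mul_PC_natCast_mul_pow ha]
  trans ∑ j ∈ range (k + M + 1), M.choose j * k.descFactorial j * a ^ (k - j) * b ^ j
  · refine sum_subset (range_subset_range.2 (by omega)) fun j _ hj => ?_
    simp [Nat.descFactorial_eq_zero_iff_lt.2 (by simpa using hj : k < j)]
  · refine (sum_subset (range_subset_range.2 (by omega)) fun j _ hj => ?_).symm
    simp [Nat.choose_eq_zero_of_lt (by simpa using hj : M < j)]

end PoissonCharlier

theorem stmt17_general (m : ℕ) (b c lam : ℚ) (hc : c ≠ 0)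
    (α : ℕ) (n : ℕ) (hn : 1 ≤ n) :
    act (Aser lam α)
        (Polynomial.X * act
          (PowerSeries.rescale ((n : ℚ) * c) expS *
            (1 + PowerSeries.C b * PowerSeries.X) ^ (m * n))
          (Polynomial.X ^ (n - 1))) =
      ∑ l ∈ Finset.range n,
        ((-1 : ℚ) ^ (m * n) * PC (m * n) (l : ℚ) (-((n : ℚ) * c) / b) *
          ((n : ℚ) * c) ^ l * ((n - 1).choose l)) • Apol lam α (n - l) := by
  have hnc : (n : ℚ) * c ≠ 0 := mul_ne_zero (Nat.cast_ne_zero.2 (by omega)) hc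
  obtain ⟨j, rfl⟩ : ∃ j, n = j + 1 := ⟨n - 1, by omega⟩
  rw [Nat.add_sub_cancel, act_X_mul_act_X_pow]
  refine sum_congr rfl fun k _ => ?_
  rw [coeff_rescale_exp_mul_one_add_pow_mul_factorial_eq_PC hnc, Apol]

theorem stmt17 (m : ℕ) (b c lam : ℚ) (hb : b ≠ 0) (hc : c ≠ 0) (hlam : lam ≠ 1)
    (α : ℕ) (hα : 0 < α) (n : ℕ) (hn : 1 ≤ n) :
    act (Aser lam α)
        (Polynomial.X * act
          (PowerSeries.rescale ((n : ℚ) * c) expS *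
            (1 + PowerSeries.C b * PowerSeries.X) ^ (m * n))
          (Polynomial.X ^ (n - 1))) =
      ∑ l ∈ Finset.range n,
        ((-1 : ℚ) ^ (m * n) * PC (m * n) (l : ℚ) (-((n : ℚ) * c) / b) *
          ((n : ℚ) * c) ^ l * ((n - 1).choose l)) • Apol lam α (n - l) :=
  stmt17_general m b c lam hc α n hn
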